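/- (Combined error bound in the static case.) Suppose u ∈ V satisfies a(u, v) = f(v) for all v ∈ V. Let V^R ⊆ V_n ⊆ V be finite-dimensional subspaces, let u_n be a Galerkin solution on V_n, and let u^R be a Galerkin solution on V^R. Then ‖u − u^R‖_V ≤ (γ/α) ‖u − P_{V_n} u‖_V + (γ/α) ‖u_n − P_{V^R} u_n‖_V. -/

import Mathlib

open scoped RealInnerProductSpace

/-- Orthogonal projection onto a submodule, as a plain function; it equals the usual
orthogonal projection whenever the submodule is finite-dimensional. -/
noncomputable def orthProj {V : Type*} [NormedAddCommGroup V] [InnerProductSpace ℝ V]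
    (K : Submodule ℝ V) (x : V) : V := by
  classical
  exact if h : FiniteDimensional ℝ K then
    haveI := h
    (K.orthogonalProjectionOnto x : V)
  else 0

/-! Céa's argument: by Galerkin orthogonality, for every `w ∈ W` the error `e = u - u_W`
satisfies `α‖e‖² ≤ a(e, e) = a(e, u - w) ≤ γ‖e‖‖u - w‖`, so `u_W` is quasi-optimal with
constant `γ/α`. Applying this to `u_n` on `V_n` and to `u^R` on `V^R ⊆ V_n` (where `u_n`
plays the role of the exact solution) and using the triangle inequality through `u_n` gives
the bound. -/

lemma orthProj_mem {V : Type*} [NormedAddCommGroup V] [InnerProductSpace ℝ V]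
    (K : Submodule ℝ V) (x : V) : orthProj K x ∈ K := by
  unfold orthProj
  split_ifs
  · exact Submodule.coe_mem _
  · exact K.zero_mem

section Galerkin

variable {V : Type*} [SeminormedAddCommGroup V] [Module ℝ V]
  {a : V →ₗ[ℝ] V →ₗ[ℝ] ℝ} {α γ : ℝ}

lemma galerkin_orthogonality {f : V →ₗ[ℝ] ℝ} {W : Submodule ℝ V} {u uW : V}
    (hu : ∀ w ∈ W, a u w = f w) (huW : ∀ w ∈ W, a uW w = f w) :
    ∀ w ∈ W, a (u - uW) w = 0 := by
  intro w hw
  rw [map_sub, LinearMap.sub_apply, hu w hw, huW w hw, sub_self]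

-- Coercivity at `v` gives `α‖v‖² ≤ γ‖v‖²`, so `γ ≥ α > 0` unless `‖v‖ = 0`.
lemma mul_norm_nonneg_of_coercive_of_bounded (hα : 0 < α)
    (hcoer : ∀ v : V, α * ‖v‖ ^ 2 ≤ a v v) (hcont : ∀ v w : V, |a v w| ≤ γ * ‖v‖ * ‖w‖)
    (v : V) : 0 ≤ γ * ‖v‖ := by
  have hvv : α * ‖v‖ ^ 2 ≤ γ * ‖v‖ * ‖v‖ := (hcoer v).trans ((le_abs_self _).trans (hcont v v))
  rcases (norm_nonneg v).eq_or_lt with hv | hv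
  · rw [← hv, mul_zero]
  · nlinarith

lemma cea_lemma (hα : 0 < α)
    (hcoer : ∀ v : V, α * ‖v‖ ^ 2 ≤ a v v) (hcont : ∀ v w : V, |a v w| ≤ γ * ‖v‖ * ‖w‖)
    {W : Submodule ℝ V} {u uW : V} (huW : uW ∈ W) (horth : ∀ w ∈ W, a (u - uW) w = 0)
    {w : V} (hw : w ∈ W) :
    ‖u - uW‖ ≤ γ / α * ‖u - w‖ := by
  set e := u - uW
  have hee : a e e = a e (u - w) := by
    have hsplit : u - w = e + (uW - w) := by simp only [e]; abel
    rw [hsplit, map_add, horth _ (W.sub_mem huW hw), add_zero]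
  have hbound : α * ‖e‖ ^ 2 ≤ γ * ‖e‖ * ‖u - w‖ :=
    calc α * ‖e‖ ^ 2 ≤ a e e := hcoer e
      _ = a e (u - w) := hee
      _ ≤ |a e (u - w)| := le_abs_self _
      _ ≤ γ * ‖e‖ * ‖u - w‖ := hcont _ _
  have hnonneg := mul_norm_nonneg_of_coercive_of_bounded hα hcoer hcont (u - w)
  rw [div_mul_eq_mul_div, le_div_iff₀ hα]
  rcases (norm_nonneg e).eq_or_lt with he | he
  · rw [← he, zero_mul]; exact hnonneg
  · nlinarith

end Galerkin

theorem combined_error_bound_static_general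
    {V : Type*} [NormedAddCommGroup V] [InnerProductSpace ℝ V]
    (a : V →ₗ[ℝ] V →ₗ[ℝ] ℝ) (f : V →ₗ[ℝ] ℝ)
    (α γ : ℝ) (hα : 0 < α)
    (hcoer : ∀ v : V, α * ‖v‖ ^ 2 ≤ a v v)
    (hcont : ∀ v w : V, |a v w| ≤ γ * ‖v‖ * ‖w‖)
    (u : V) (hu : ∀ v : V, a u v = f v)
    (Vn VR : Submodule ℝ V)
    (hRn : VR ≤ Vn)
    (un : V) (hun : un ∈ Vn) (hGaln : ∀ w ∈ Vn, a un w = f w)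
    (uR : V) (huR : uR ∈ VR) (hGalR : ∀ w ∈ VR, a uR w = f w) :
    ‖u - uR‖ ≤ (γ / α) * ‖u - orthProj Vn u‖ + (γ / α) * ‖un - orthProj VR un‖ := by
  have hn : ‖u - un‖ ≤ γ / α * ‖u - orthProj Vn u‖ :=
    cea_lemma hα hcoer hcont hun (galerkin_orthogonality (fun w _ => hu w) hGaln)
      (orthProj_mem Vn u)
  have hR : ‖un - uR‖ ≤ γ / α * ‖un - orthProj VR un‖ :=
    cea_lemma hα hcoer hcont huR
      (galerkin_orthogonality (fun w hw => hGaln w (hRn hw)) hGalR) (orthProj_mem VR un)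
  calc ‖u - uR‖ ≤ ‖u - un‖ + ‖un - uR‖ := norm_sub_le_norm_sub_add_norm_sub u un uR
    _ ≤ _ := add_le_add hn hR

/-- **Combined error bound in the static case** (`V^R ⊆ V_n`): `‖u - u^R‖ ≤ (γ/α)‖u - P_{V_n} u‖ + (γ/α)‖u_n - P_{V^R} u_n‖`. -/
theorem combined_error_bound_static
    {V : Type*} [NormedAddCommGroup V] [InnerProductSpace ℝ V]
    (a : V →ₗ[ℝ] V →ₗ[ℝ] ℝ) (f : V →ₗ[ℝ] ℝ)
    (α γ : ℝ) (hα : 0 < α)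
    (hcoer : ∀ v : V, α * ‖v‖ ^ 2 ≤ a v v)
    (hcont : ∀ v w : V, |a v w| ≤ γ * ‖v‖ * ‖w‖)
    (u : V) (hu : ∀ v : V, a u v = f v)
    (Vn VR : Submodule ℝ V) [FiniteDimensional ℝ ↥Vn] [FiniteDimensional ℝ ↥VR]
    (hRn : VR ≤ Vn)
    (un : V) (hun : un ∈ Vn) (hGaln : ∀ w ∈ Vn, a un w = f w)
    (uR : V) (huR : uR ∈ VR) (hGalR : ∀ w ∈ VR, a uR w = f w) :
    ‖u - uR‖ ≤ (γ / α) * ‖u - orthProj Vn u‖ + (γ / α) * ‖un - orthProj VR un‖ :=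
  combined_error_bound_static_general a f α γ hα hcoer hcont u hu Vn VR hRn un hun hGaln uR huR
    hGalR
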